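/- arXiv:math/0608183 — 2 statements merged into one kernel-verified Lean document; each statement's English description precedes it below -/
import Mathlib

section
/- Let k be a field and let Q be a finite acyclic quiver with vertex set Q₀ = {0, 1, …, r} (r ≥ 1) in which 0 is the unique source (i.e., every vertex i ≠ 0 is the head of at least one arrow and 0 is the head of none). In the polynomial ring k[y_a : a ∈ Q₁], the ideal B_Y generated by the monomials ∏_{a ∈ Q′₁} y_a, where Q′ ranges over all spanning trees of Q rooted at 0, is equal to the intersection ⋂_{i=1}^{r} J_i, where J_i is the ideal generated by the variables y_a with head(a) = i. -/
open MvPolynomial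

/-- Reachability from `u` to `v` by a directed path using only arrows in the set `T`. -/
def ReachIn {V A : Type*} (tl hd : A → V) (T : Set A) (u v : V) : Prop :=
  Relation.ReflTransGen (fun x y => ∃ a ∈ T, tl a = x ∧ hd a = y) u v

/-- `T` is a spanning tree of the quiver rooted at `0`: it has `|Q₀| - 1` arrows and
every vertex is reachable from `0` by a directed path in `T`. -/
def IsSpanningTree {A : Type*} (r : ℕ) (tl hd : A → Fin (r + 1)) (T : Finset A) : Prop :=
  T.card = r ∧ ∀ v : Fin (r + 1), ReachIn tl hd (↑T) 0 v

/-!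
Every spanning tree rooted at `0` contains, for each `i ≠ 0`, the last arrow of its path
from `0` to `i`, so its monomial lies in every `J_i`. Conversely, all the ideals involved are
monomial ideals, so it suffices to treat a monomial lying in every `J_i`: its support contains
an arrow into each `i ≠ 0`. Choosing one such arrow for each `i ≠ 0` gives `r` distinct arrows,
and following the chosen arrows backwards from any vertex must stop, by acyclicity, and can only
stop at `0`; hence they form a spanning tree dividing the monomial.
-/

section Quiver

variable {V A : Type*} (tl hd : A → V)

lemma wellFounded_of_forall_not_transGen [Finite V] {R : V → V → Prop}
    (h : ∀ v, ¬ Relation.TransGen R v v) : WellFounded R :=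
  have : Std.Irrefl (Relation.TransGen R) := ⟨h⟩
  Subrelation.wf Relation.TransGen.single (Finite.wellFounded_of_trans_of_irrefl _)

lemma exists_head_eq_of_reachIn {T : Set A} {u v : V} (h : ReachIn tl hd T u v) (huv : u ≠ v) :
    ∃ a ∈ T, hd a = v := by
  rcases Relation.ReflTransGen.cases_tail h with rfl | ⟨_, _, a, haT, _, rfl⟩
  · exact absurd rfl huv
  · exact ⟨a, haT, rfl⟩

lemma reachIn_of_forall_exists_head_eq
    (hwf : WellFounded fun x y => ∃ a, tl a = x ∧ hd a = y) {T : Set A} {v₀ : V}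
    (hT : ∀ v ≠ v₀, ∃ a ∈ T, hd a = v) (v : V) : ReachIn tl hd T v₀ v := by
  induction v using hwf.induction with
  | _ v ih =>
    by_cases hv : v = v₀
    · exact hv ▸ Relation.ReflTransGen.refl
    · obtain ⟨a, haT, rfl⟩ := hT v hv
      exact (ih (tl a) ⟨a, rfl, rfl⟩).tail ⟨a, haT, rfl, rfl⟩

end Quiver

lemma exists_isSpanningTree_subset {A : Type*} {r : ℕ} (tl hd : A → Fin (r + 1))
    (hacyclic : ∀ v : Fin (r + 1),
      ¬ Relation.TransGen (fun x y => ∃ a : A, tl a = x ∧ hd a = y) v v)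
    {S : Set A} (hS : ∀ i ≠ 0, ∃ a ∈ S, hd a = i) :
    ∃ T : Finset A, IsSpanningTree r tl hd T ∧ ↑T ⊆ S := by
  classical
  choose g hgS hgd using fun i : {i : Fin (r + 1) // i ≠ 0} => hS i i.2
  have hg : Function.Injective g := fun i j hij =>
    Subtype.ext <| (hgd i).symm.trans <| (congrArg hd hij).trans (hgd j)
  refine ⟨Finset.univ.image g, ⟨?_, fun v => ?_⟩, ?_⟩
  · simp [Finset.card_image_of_injective _ hg, Fintype.card_subtype_compl]
  · exact reachIn_of_forall_exists_head_eq tl hd (wellFounded_of_forall_not_transGen hacyclic)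
      (fun i hi => ⟨g ⟨i, hi⟩, by simp, hgd _⟩) v
  · rw [Finset.coe_image, Finset.coe_univ, Set.image_univ]
    exact Set.range_subset_iff.2 hgS

lemma sum_single_one_le_iff {α : Type*} {s : Finset α} {m : α →₀ ℕ} :
    ∑ a ∈ s, Finsupp.single a 1 ≤ m ↔ ↑s ⊆ (m.support : Set α) := by
  classical
  simp only [Finsupp.le_def, Finset.sum_apply', Finsupp.single_apply, Finset.sum_ite_eq',
    Set.subset_def, Finset.mem_coe, Finsupp.mem_support_iff]
  refine ⟨fun h a ha => ?_, fun h a => ?_⟩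
  · simpa [ha, Nat.one_le_iff_ne_zero] using h a
  · split_ifs with ha
    · exact Nat.one_le_iff_ne_zero.2 (h a ha)
    · exact Nat.zero_le _

lemma mem_span_setOf_prod_X_iff {A R : Type*} [CommSemiring R] {P : Finset A → Prop}
    {p : MvPolynomial A R} :
    p ∈ Ideal.span {m | ∃ T, P T ∧ m = ∏ a ∈ T, X a} ↔
      ∀ m ∈ p.support, ∃ T, P T ∧ ↑T ⊆ (m.support : Set A) := by
  have hgen : {m : MvPolynomial A R | ∃ T, P T ∧ m = ∏ a ∈ T, X a} =
      (fun s => monomial s (1 : R)) '' {s | ∃ T, P T ∧ s = ∑ a ∈ T, Finsupp.single a 1} := by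
    ext m
    simp [monomial_sum_one, X, eq_comm]
  simp only [hgen, mem_ideal_span_monomial_image, Set.mem_ofPred_eq]
  refine forall₂_congr fun m _ => ⟨?_, ?_⟩
  · rintro ⟨_, ⟨T, hT, rfl⟩, hle⟩
    exact ⟨T, hT, sum_single_one_le_iff.1 hle⟩
  · rintro ⟨T, hT, hsub⟩
    exact ⟨_, ⟨T, hT, rfl⟩, sum_single_one_le_iff.2 hsub⟩

theorem spanning_tree_ideal_eq_inter_general (k : Type*) [Field k] (r : ℕ)
    (A : Type*)
    (tl hd : A → Fin (r + 1))
    (hacyclic : ∀ v : Fin (r + 1),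
      ¬ Relation.TransGen (fun x y => ∃ a : A, tl a = x ∧ hd a = y) v v) :
    Ideal.span { m : MvPolynomial A k |
        ∃ T : Finset A, IsSpanningTree r tl hd T ∧ m = ∏ a ∈ T, X a }
      = ⨅ (i : Fin (r + 1)) (_ : i ≠ 0),
          Ideal.span { p : MvPolynomial A k | ∃ a : A, hd a = i ∧ p = X a } := by
  refine le_antisymm (Ideal.span_le.2 ?_) fun p hp => ?_
  · rintro _ ⟨T, hT, rfl⟩
    refine Ideal.mem_iInf.2 fun i => Ideal.mem_iInf.2 fun hi => ?_
    obtain ⟨a, haT, rfl⟩ := exists_head_eq_of_reachIn tl hd (hT.2 i) (Ne.symm hi)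
    exact Ideal.mem_of_dvd _ (Finset.dvd_prod_of_mem _ haT) (Ideal.subset_span ⟨a, rfl, rfl⟩)
  · have hJ : ∀ i, {p : MvPolynomial A k | ∃ a, hd a = i ∧ p = X a} = X '' {a | hd a = i} :=
      fun i => by ext; simp [eq_comm]
    simp only [Ideal.mem_iInf, hJ, mem_ideal_span_X_image] at hp
    refine mem_span_setOf_prod_X_iff.2 fun m hm => exists_isSpanningTree_subset tl hd hacyclic ?_
    intro i hi
    obtain ⟨a, rfl, ha⟩ := hp i hi m hm
    exact ⟨a, Finsupp.mem_support_iff.2 ha, rfl⟩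

/-- For a finite acyclic quiver with vertex set `{0, 1, …, r}` (`r ≥ 1`) whose unique
source is `0`, the ideal of `k[y_a : a ∈ Q₁]` generated by the monomials
`∏_{a ∈ T} y_a`, for `T` ranging over spanning trees rooted at `0`, equals the
intersection over `i ≠ 0` of the ideals generated by the variables `y_a` with
`head a = i`. -/
theorem spanning_tree_ideal_eq_inter (k : Type*) [Field k] (r : ℕ) (hr : 1 ≤ r)
    (A : Type*) [Fintype A] [DecidableEq A]
    (tl hd : A → Fin (r + 1))
    (hacyclic : ∀ v : Fin (r + 1),
      ¬ Relation.TransGen (fun x y => ∃ a : A, tl a = x ∧ hd a = y) v v)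
    (hsource : ∀ i : Fin (r + 1), i ≠ 0 → ∃ a : A, hd a = i)
    (hnohead0 : ∀ a : A, hd a ≠ 0) :
    Ideal.span { m : MvPolynomial A k |
        ∃ T : Finset A, IsSpanningTree r tl hd T ∧ m = ∏ a ∈ T, X a }
      = ⨅ (i : Fin (r + 1)) (_ : i ≠ 0),
          Ideal.span { p : MvPolynomial A k | ∃ a : A, hd a = i ∧ p = X a } :=
  spanning_tree_ideal_eq_inter_general k r A tl hd hacyclic
end

section
/- Let k be a field, let n, m, s be natural numbers, and let deg : ℤⁿ → ℤˢ and d : ℤⁿ → ℤᵐ be group homomorphisms. Grade the polynomial ring S = k[x₁, …, xₙ] by ℤˢ, declaring the monomial x^u (u ∈ ℕⁿ) to be homogeneous of degree deg(u). Let Φ : S → k[ℤᵐ] be the k-algebra homomorphism to the group algebra of ℤᵐ determined by Φ(x^u) = e^{d(u)}. Then the toric ideal I = ( x^u − x^v : u, v ∈ ℕⁿ, d(u) = d(v) and deg(u) = deg(v) ) is equal to the ideal of S generated by the deg-homogeneous elements of ker Φ. -/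
/-!
If `p` is homogeneous and `Φ p = 0`, then for any `u` in the support of `p` the coefficient of
`e^{d(u)}` in `Φ p` vanishes, so some other `v` in the support has `d(v) = d(u)`; being in the
same degree, `x^u - x^v` is a generator of the toric ideal. Subtracting `(coeff u p) • (x^u - x^v)`
removes `u` from the support without leaving the kernel or the degree, so induction on the size
of the support shows that `p` lies in the toric ideal. The converse inclusion is immediate.
-/

open MvPolynomial

namespace MvPolynomial

variable {σ R M : Type*}

section CommSemiring

variable [CommSemiring R] (Φ : MvPolynomial σ R →ₗ[R] AddMonoidAlgebra R M) (f : (σ →₀ ℕ) → M)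

theorem coeff_apply_eq_sum_filter
    (hΦ : ∀ u, Φ (monomial u 1) = AddMonoidAlgebra.single (f u) 1)
    (p : MvPolynomial σ R) (g : M) [DecidableEq M] :
    (Φ p).coeff g = ∑ w ∈ p.support with f w = g, coeff w p := by
  have hmon : ∀ w, Φ (monomial w (coeff w p)) = AddMonoidAlgebra.single (f w) (coeff w p) := by
    intro w
    rw [← mul_one (coeff w p), ← smul_eq_mul, ← smul_monomial, map_smul, hΦ,
      AddMonoidAlgebra.smul_single, smul_eq_mul, mul_one]
  conv_lhs => rw [p.as_sum, map_sum]
  simp only [hmon, AddMonoidAlgebra.coeff_sum, Finset.sum_apply', Finset.sum_filter,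
    AddMonoidAlgebra.coeff_single, Finsupp.single_apply]

variable {Φ f}

theorem exists_ne_mem_support_eq_of_apply_eq_zero
    (hΦ : ∀ u, Φ (monomial u 1) = AddMonoidAlgebra.single (f u) 1)
    {p : MvPolynomial σ R} (hp : Φ p = 0) {u : σ →₀ ℕ} (hu : u ∈ p.support) :
    ∃ v ∈ p.support, v ≠ u ∧ f v = f u := by
  classical
  by_contra! h
  have hfiber : {w ∈ p.support | f w = f u} = {u} :=
    Finset.eq_singleton_iff_unique_mem.2
      ⟨Finset.mem_filter.2 ⟨hu, rfl⟩, fun w hw => by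
        by_contra hwu
        exact h w (Finset.mem_filter.1 hw).1 hwu (Finset.mem_filter.1 hw).2⟩
  have hcoeff := coeff_apply_eq_sum_filter Φ f hΦ p (f u)
  rw [hp, hfiber, Finset.sum_singleton] at hcoeff
  exact mem_support_iff.1 hu hcoeff.symm

end CommSemiring

section CommRing

variable [CommRing R]

theorem support_monomial_sub_monomial_subset [DecidableEq σ] (u v : σ →₀ ℕ) (a b : R) :
    (monomial u a - monomial v b).support ⊆ {u, v} :=
  (support_sub σ _ _).trans
    (Finset.union_subset_union support_monomial_subset support_monomial_subset)

variable {Φ : MvPolynomial σ R →ₗ[R] AddMonoidAlgebra R M} {f : (σ →₀ ℕ) → M}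

theorem mem_span_binomials_of_support_subset_of_apply_eq_zero
    (hΦ : ∀ u, Φ (monomial u 1) = AddMonoidAlgebra.single (f u) 1)
    {A : Set (σ →₀ ℕ)} {p : MvPolynomial σ R} (hA : ↑p.support ⊆ A) (hp : Φ p = 0) :
    p ∈ Ideal.span {q | ∃ u ∈ A, ∃ v ∈ A, f u = f v ∧ q = monomial u 1 - monomial v 1} := by
  classical
  induction hN : p.support.card using Nat.strong_induction_on generalizing p with
  | _ N ih =>
  obtain rfl | ⟨u, hu⟩ := p.support.eq_empty_or_nonempty.imp support_eq_empty.1 id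
  · exact zero_mem _
  obtain ⟨v, hv, hvu, hfv⟩ := exists_ne_mem_support_eq_of_apply_eq_zero hΦ hp hu
  set c := coeff u p
  have hscale :
      monomial u c - monomial v c = c • (monomial u 1 - monomial v 1 : MvPolynomial σ R) := by
    rw [smul_sub, smul_monomial, smul_monomial, smul_eq_mul, mul_one]
  have hbinomial : monomial u c - monomial v c ∈
      Ideal.span {q | ∃ u ∈ A, ∃ v ∈ A, f u = f v ∧ q = monomial u 1 - monomial v 1} :=
    hscale ▸ Submodule.smul_of_tower_mem _ c
      (Ideal.subset_span ⟨u, hA hu, v, hA hv, hfv.symm, rfl⟩)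
  set q := p - (monomial u c - monomial v c)
  have hq_support : q.support ⊆ p.support.erase u :=
    (support_sub_monomial_sub_monomial_subset p u v c hvu.symm rfl).trans
      (Finset.union_subset le_rfl
        (Finset.singleton_subset_iff.2 (Finset.mem_erase.2 ⟨hvu, hv⟩)))
  have hq_card : q.support.card < N :=
    hN ▸ (Finset.card_le_card hq_support).trans_lt (Finset.card_erase_lt_of_mem hu)
  have hq : Φ q = 0 := by
    rw [map_sub, hscale, map_smul, map_sub, hΦ, hΦ, hfv, sub_self, smul_zero, hp, sub_zero]
  have hq_mem := ih _ hq_card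
    ((Finset.coe_subset.2 (hq_support.trans (Finset.erase_subset u _))).trans hA) hq rfl
  simpa [q] using add_mem hq_mem hbinomial

end CommRing

end MvPolynomial

/-- Let `deg : ℤⁿ → ℤˢ` and `d : ℤⁿ → ℤᵐ` be group homomorphisms, grade
`S = k[x₁, …, xₙ]` by `ℤˢ` via `deg`, and let `Φ : S → k[ℤᵐ]` be the `k`-algebra
homomorphism to the group algebra of `ℤᵐ` determined by `Φ(x^u) = e^{d(u)}`.  Then the
toric ideal `I = (x^u − x^v : d(u) = d(v), deg(u) = deg(v))` equals the ideal generated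
by the `deg`-homogeneous elements of `ker Φ`. -/
theorem toric_ideal_eq_span_homogeneous_kernel (k : Type*) [Field k] (n m s : ℕ)
    (deg : (Fin n → ℤ) →+ (Fin s → ℤ)) (d : (Fin n → ℤ) →+ (Fin m → ℤ))
    (Φ : MvPolynomial (Fin n) k →ₐ[k] AddMonoidAlgebra k (Fin m → ℤ))
    (hΦ : ∀ u : Fin n →₀ ℕ,
      Φ (monomial u 1) = AddMonoidAlgebra.single (d (fun i => (u i : ℤ))) 1) :
    Ideal.span { p : MvPolynomial (Fin n) k | ∃ u v : Fin n →₀ ℕ,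
          d (fun i => (u i : ℤ)) = d (fun i => (v i : ℤ)) ∧
          deg (fun i => (u i : ℤ)) = deg (fun i => (v i : ℤ)) ∧
          p = monomial u 1 - monomial v 1 }
      = Ideal.span { p : MvPolynomial (Fin n) k |
          (∃ g : Fin s → ℤ, ∀ u ∈ p.support, deg (fun i => (u i : ℤ)) = g) ∧
          Φ p = 0 } := by
  apply le_antisymm <;> rw [Ideal.span_le]
  · rintro _ ⟨u, v, hd, hdeg, rfl⟩
    refine Ideal.subset_span
      ⟨⟨deg (fun i => (u i : ℤ)), fun w hw => ?_⟩, by rw [map_sub, hΦ, hΦ, hd, sub_self]⟩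
    rcases Finset.mem_insert.1 (support_monomial_sub_monomial_subset u v (1 : k) 1 hw)
      with rfl | hw
    · rfl
    · rw [Finset.mem_singleton.1 hw, hdeg]
  · rintro p ⟨⟨g, hg⟩, hp⟩
    refine Ideal.span_mono ?_ (mem_span_binomials_of_support_subset_of_apply_eq_zero
      (Φ := Φ.toLinearMap) hΦ (A := {u | deg (fun i => (u i : ℤ)) = g}) hg hp)
    rintro _ ⟨u, hu, v, hv, hd, rfl⟩
    exact ⟨u, v, hd, hu.trans hv.symm, rfl⟩
end
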